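/- arXiv:1709.01404 — 4 statements merged into one kernel-verified Lean document; each statement's English description precedes it below -/
import Mathlib

section
/- Let I = [0,1] and let V be the Volterra operator Vf(t) = ∫₀ᵗ f(s) ds, defined on L¹₀(I) = {f ∈ L¹(I) : ∫₀¹ f = 0}, mapping into C(I). Then the operator norm of V : L¹₀(I) → C(I) equals 1/2. -/
/-!
If `∫ f = 0`, then `∫ₛ f = -∫_{sᶜ} f`, so `2 ‖∫ₛ f‖ ≤ ∫ₛ ‖f‖ + ∫_{sᶜ} ‖f‖ = ‖f‖₁`; with `s = (0, t]`
this gives `|V f (t)| ≤ ‖f‖₁ / 2`. Equality holds for `f = 1` on `(0, 1/2]`, `f = -1` on `(1/2, 1]`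
and `t = 1/2`.
-/

open MeasureTheory Set

theorem norm_setIntegral_le_half_integral_norm_of_integral_eq_zero {α E : Type*}
    [MeasurableSpace α] [NormedAddCommGroup E] [NormedSpace ℝ E] {μ : Measure α} {f : α → E}
    {s : Set α} (hs : MeasurableSet s) (hf : Integrable f μ) (hf₀ : ∫ x, f x ∂μ = 0) :
    ‖∫ x in s, f x ∂μ‖ ≤ (∫ x, ‖f x‖ ∂μ) / 2 := by
  have hcompl : ∫ x in sᶜ, f x ∂μ = -∫ x in s, f x ∂μ :=
    eq_neg_of_add_eq_zero_right (by rw [integral_add_compl hs hf, hf₀])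
  have hs_le := norm_integral_le_integral_norm (μ := μ.restrict s) f
  have hsc_le := norm_integral_le_integral_norm (μ := μ.restrict sᶜ) f
  rw [hcompl, norm_neg] at hsc_le
  linarith [integral_add_compl hs hf.norm]

theorem abs_integral_Ioc_le_half_of_integral_Ioc_eq_zero {f : ℝ → ℝ} {a b t : ℝ}
    (hf : IntegrableOn f (Ioc a b)) (hf₀ : ∫ s in Ioc a b, f s = 0) (htb : t ≤ b) :
    |∫ s in Ioc a t, f s| ≤ (∫ s in Ioc a b, |f s|) / 2 := by
  have h := norm_setIntegral_le_half_integral_norm_of_integral_eq_zero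
    (measurableSet_Ioc (a := a) (b := t)) hf hf₀
  rwa [Measure.restrict_restrict measurableSet_Ioc,
    inter_eq_left.mpr (Ioc_subset_Ioc_right htb)] at h

noncomputable def halfSign (s : ℝ) : ℝ := (Ioc 0 (1 / 2)).indicator (fun _ => 2) s - 1

theorem integrableOn_halfSign : IntegrableOn halfSign (Ioc 0 1) :=
  ((integrable_const 2).indicator measurableSet_Ioc).sub (integrable_const 1)

theorem abs_halfSign (s : ℝ) : |halfSign s| = 1 := by
  by_cases hs : s ∈ Ioc (0 : ℝ) (1 / 2) <;> norm_num [halfSign, hs]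

theorem integral_Ioc_halfSign : ∫ s in Ioc (0 : ℝ) 1, halfSign s = 0 := by
  simp only [halfSign]
  rw [integral_sub ((integrable_const 2).indicator measurableSet_Ioc) (integrable_const 1),
    integral_indicator measurableSet_Ioc, Measure.restrict_restrict measurableSet_Ioc,
    inter_eq_left.mpr (Ioc_subset_Ioc_right (by norm_num))]
  norm_num

theorem integral_Ioc_half_halfSign : ∫ s in Ioc (0 : ℝ) (1 / 2), halfSign s = 1 / 2 := by
  rw [setIntegral_congr_fun measurableSet_Ioc (g := fun _ => (1 : ℝ))
    fun s hs => by norm_num [halfSign, hs]]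
  norm_num

/-- The operator norm of the Volterra operator `V f (t) = ∫₀ᵗ f`, acting from
`L¹₀(0,1) = {f ∈ L¹(0,1) : ∫₀¹ f = 0}` into `C[0,1]`, equals `1/2`.  The operator
norm is expressed as the least upper bound of all values `|V f (t)|` over functions
`f` in the unit ball of `L¹₀(0,1)` and points `t ∈ [0,1]`. -/
theorem volterra_opNorm_eq_half :
    IsLUB {r : ℝ | ∃ f : ℝ → ℝ, IntegrableOn f (Set.Ioc 0 1) ∧
        (∫ s in Set.Ioc (0:ℝ) 1, f s) = 0 ∧ (∫ s in Set.Ioc (0:ℝ) 1, |f s|) ≤ 1 ∧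
        ∃ t ∈ Set.Icc (0:ℝ) 1, r = |∫ s in Set.Ioc (0:ℝ) t, f s|}
      (1/2) := by
  refine ⟨?_, fun r hr => hr ⟨halfSign, integrableOn_halfSign, integral_Ioc_halfSign,
    by simp [abs_halfSign], 1 / 2, by norm_num, by rw [integral_Ioc_half_halfSign]; norm_num⟩⟩
  rintro r ⟨f, hf, hf₀, hf₁, t, ht, rfl⟩
  linarith [abs_integral_Ioc_le_half_of_integral_Ioc_eq_zero hf hf₀ ht.2]
end

section
/- Let V : L¹₀(0,1) → C[0,1] be the operator Vf(t) = ∫₀ᵗ f. For every n ∈ ℕ, the n-th isomorphism number satisfies iₙ(V) ≥ 1/(2n). Concretely, there exist bounded linear maps B : ℓ^∞_n → L¹₀(0,1) with ‖B‖ ≤ 2n and A : C[0,1] → ℓ^∞_n with ‖A‖ ≤ 1 such that A ∘ V ∘ B is the identity on ℓ^∞_n. -/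
open MeasureTheory

noncomputable def muI : Measure ℝ := volume.restrict (Set.Ioc (0:ℝ) 1)

/-- `L¹₀(0,1)`: the subspace of `L¹(0,1)` consisting of functions with zero integral. -/
noncomputable def L10 : Submodule ℝ (Lp ℝ 1 muI) where
  carrier := {f | ∫ x, f x ∂muI = 0}
  zero_mem' := by
    simp only [Set.mem_setOf_eq]
    rw [integral_congr_ae (Lp.coeFn_zero ℝ 1 muI)]
    simp
  add_mem' := by
    intro f g hf hg
    simp only [Set.mem_setOf_eq] at *
    rw [integral_congr_ae (Lp.coeFn_add f g)]
    simp only [Pi.add_apply]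
    rw [integral_add (L1.integrable_coeFn f) (L1.integrable_coeFn g), hf, hg, add_zero]
  smul_mem' := by
    intro c f hf
    simp only [Set.mem_setOf_eq] at *
    rw [integral_congr_ae (Lp.coeFn_smul c f)]
    simp only [Pi.smul_apply]
    rw [integral_smul, hf, smul_zero]

/-- The sup norm of the Volterra primitive `V f` over `[0,1]`. -/
noncomputable def supV (f : Lp ℝ 1 muI) : ℝ :=
  ⨆ t : Set.Icc (0:ℝ) 1, |∫ s in Set.Ioc (0:ℝ) t.1, f s ∂muI|

/-!
Split `(0,1]` into `2n` cells of length `1/(2n)` and let `fᵢ` be `2n` on cell `2i` and `-2n` on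
cell `2i+1`. Then `‖fᵢ‖₁ = 2`, `∫ fᵢ = 0`, and `V fᵢ` is a tent of height one over `[i/n, (i+1)/n]`
peaking at `tᵢ = (2i+1)/(2n)`; these tents have disjoint supports. Hence `B y = ∑ yᵢ fᵢ` has norm
at most `2n` and lands in `L¹₀`, and sampling `V (B y)` at the peaks, which is an operator of norm
at most one, returns `y`.
-/

section LinearCombination

variable {ι E : Type*} [Fintype ι] [NormedAddCommGroup E] [NormedSpace ℝ E]

noncomputable def linearCombinationCLM (F : ι → E) : (ι → ℝ) →L[ℝ] E :=
  ∑ i, (ContinuousLinearMap.proj i).smulRight (F i)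

@[simp]
lemma linearCombinationCLM_apply (F : ι → E) (y : ι → ℝ) :
    linearCombinationCLM F y = ∑ i, y i • F i := by
  simp [linearCombinationCLM]

lemma norm_linearCombinationCLM_le {F : ι → E} {C : ℝ} (hC : 0 ≤ C) (hF : ∀ i, ‖F i‖ ≤ C) :
    ‖linearCombinationCLM F‖ ≤ Fintype.card ι * C := by
  refine ContinuousLinearMap.opNorm_le_bound _ (by positivity) fun y => ?_
  calc ‖linearCombinationCLM F y‖ ≤ ∑ i, ‖y i • F i‖ := by
        rw [linearCombinationCLM_apply]; exact norm_sum_le _ _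
    _ ≤ ∑ _i : ι, ‖y‖ * C := by
        gcongr with i
        rw [norm_smul]
        exact mul_le_mul (norm_le_pi_norm y i) (hF i) (norm_nonneg _) (norm_nonneg _)
    _ = Fintype.card ι * C * ‖y‖ := by
        rw [Finset.sum_const, Finset.card_univ, nsmul_eq_mul]; ring

end LinearCombination

section SetIntegral

variable {α : Type*} [MeasurableSpace α]

noncomputable def setIntegralCLM {E : Type*} [NormedAddCommGroup E] [NormedSpace ℝ E]
    [CompleteSpace E] (μ : Measure α) (s : Set α) : Lp E 1 μ →L[ℝ] E :=
  L1.integralCLM.comp (LpToLpRestrictCLM α E ℝ μ 1 s)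

lemma setIntegralCLM_apply {E : Type*} [NormedAddCommGroup E] [NormedSpace ℝ E]
    [CompleteSpace E] (μ : Measure α) (s : Set α) (f : Lp E 1 μ) :
    setIntegralCLM μ s f = ∫ x in s, f x ∂μ := by
  rw [setIntegralCLM, ContinuousLinearMap.comp_apply, ← L1.integral_def, L1.integral_eq_integral]
  exact integral_congr_ae (LpToLpRestrictCLM_coeFn ℝ s f)

lemma setIntegral_linearCombinationCLM {ι : Type*} [Fintype ι] {μ : Measure α}
    (F : ι → Lp ℝ 1 μ) (y : ι → ℝ) (s : Set α) :
    ∫ x in s, linearCombinationCLM F y x ∂μ = ∑ i, y i * ∫ x in s, F i x ∂μ := by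
  simp only [← setIntegralCLM_apply, linearCombinationCLM_apply, map_sum, map_smul, smul_eq_mul]

end SetIntegral

noncomputable def evalCLMPi {ι X : Type*} [Fintype ι] [TopologicalSpace X] [CompactSpace X]
    (x : ι → X) : C(X, ℝ) →L[ℝ] (ι → ℝ) :=
  ContinuousLinearMap.pi fun j => ContinuousMap.evalCLM ℝ (x j)

lemma norm_evalCLMPi_le {ι X : Type*} [Fintype ι] [TopologicalSpace X] [CompactSpace X]
    (x : ι → X) : ‖evalCLMPi x‖ ≤ 1 :=
  ContinuousLinearMap.norm_pi_le_of_le (fun j => ContinuousLinearMap.opNorm_le_bound _ zero_le_one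
    fun g => by simpa using g.norm_coe_le_norm (x j)) zero_le_one

noncomputable def volterra (μ : Measure ℝ) [NullSingletonClass μ] (f : Lp ℝ 1 μ) :
    C(Set.Icc (0:ℝ) 1, ℝ) where
  toFun t := ∫ s in Set.Ioc (0:ℝ) t.1, f s ∂μ
  continuous_toFun := by
    refine ((L1.integrable_coeFn f).continuous_primitive 0).comp continuous_subtype_val
      |>.congr fun t => ?_
    exact intervalIntegral.integral_of_le t.2.1

instance : IsFiniteMeasure muI := by
  unfold muI; infer_instance

instance : NullSingletonClass muI := by
  unfold muI; infer_instance

lemma setIntegral_Ioc_zero_one (f : ℝ → ℝ) : ∫ x in Set.Ioc 0 1, f x ∂muI = ∫ x, f x ∂muI := by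
  rw [muI, Measure.restrict_restrict measurableSet_Ioc, Set.inter_self]

def cell (N k : ℕ) : Set ℝ := Set.Ioc ((k : ℝ) / N) ((k + 1 : ℕ) / N)

lemma measurableSet_cell (N k : ℕ) : MeasurableSet (cell N k) := measurableSet_Ioc

lemma measureReal_cell {N k : ℕ} (hk : k < N) : muI.real (cell N k) = (N : ℝ)⁻¹ := by
  have hN : (0 : ℝ) < N := by exact_mod_cast Nat.zero_lt_of_lt hk
  have hsub : cell N k ⊆ Set.Ioc 0 1 :=
    Set.Ioc_subset_Ioc (by positivity) ((div_le_one hN).2 (by exact_mod_cast hk))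
  rw [muI, measureReal_restrict_apply (measurableSet_cell N k), Set.inter_eq_left.2 hsub, cell,
    Real.volume_real_Ioc_of_le (by gcongr; simp)]
  field_simp
  push_cast
  ring

lemma measureReal_cell_inter_Ioc {N k l : ℕ} (hl : l ≤ N) :
    muI.real (cell N k ∩ Set.Ioc 0 ((l : ℝ) / N)) = if k < l then (N : ℝ)⁻¹ else 0 := by
  rw [cell]
  split_ifs with hkl
  · rw [Set.inter_eq_left.2 (Set.Ioc_subset_Ioc (by positivity) (by gcongr; exact_mod_cast hkl)),
      ← cell, measureReal_cell (hkl.trans_le hl)]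
  · rw [(Set.Ioc_disjoint_Ioc_of_le (by gcongr; exact_mod_cast not_lt.1 hkl)).symm.inter_eq]
    simp

noncomputable def tentDeriv (n : ℕ) (i : Fin n) : Lp ℝ 1 muI :=
  indicatorConstLp 1 (measurableSet_cell _ _) (measure_ne_top muI (cell (2 * n) (2 * i)))
      (2 * n : ℝ) -
    indicatorConstLp 1 (measurableSet_cell _ _) (measure_ne_top muI (cell (2 * n) (2 * i + 1)))
      (2 * n : ℝ)

noncomputable def tentPeak (n : ℕ) (i : Fin n) : Set.Icc (0:ℝ) 1 :=
  ⟨((2 * i + 1 : ℕ) : ℝ) / (2 * n : ℕ), by positivity,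
    div_le_one_of_le₀ (by exact_mod_cast (by omega : 2 * (i : ℕ) + 1 ≤ 2 * n)) (by positivity)⟩

lemma norm_tentDeriv_le {n : ℕ} (i : Fin n) : ‖tentDeriv n i‖ ≤ 2 := by
  have hn : 0 < n := i.pos
  have hnorm : ∀ k < 2 * n, ‖indicatorConstLp 1 (measurableSet_cell _ _)
      (measure_ne_top muI (cell (2 * n) k)) (2 * n : ℝ)‖ = 1 := fun k hk => by
    rw [norm_indicatorConstLp one_ne_zero ENNReal.one_ne_top, measureReal_cell hk]
    simp only [ENNReal.toReal_one, div_one, Real.rpow_one, Real.norm_eq_abs]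
    push_cast
    rw [abs_of_pos (by positivity)]
    field_simp
  calc ‖tentDeriv n i‖ ≤ _ + _ := norm_sub_le _ _
    _ = 2 := by rw [hnorm _ (by omega), hnorm _ (by omega)]; norm_num

lemma setIntegral_tentDeriv {n : ℕ} (i : Fin n) {l : ℕ} (hl : l ≤ 2 * n) :
    ∫ x in Set.Ioc 0 ((l : ℝ) / (2 * n : ℕ)), tentDeriv n i x ∂muI =
      (if 2 * i < l then 1 else 0) - (if 2 * i + 1 < l then 1 else 0) := by
  have hn : 0 < n := i.pos
  have hc : ((2 * n : ℕ) : ℝ)⁻¹ • (2 * n : ℝ) = 1 := by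
    rw [smul_eq_mul]; push_cast; field_simp
  rw [← setIntegralCLM_apply, tentDeriv, map_sub, setIntegralCLM_apply, setIntegralCLM_apply,
    setIntegral_indicatorConstLp measurableSet_Ioc, setIntegral_indicatorConstLp measurableSet_Ioc,
    measureReal_cell_inter_Ioc hl, measureReal_cell_inter_Ioc hl]
  split_ifs <;> simp only [hc, zero_smul]

lemma integral_tentDeriv {n : ℕ} (i : Fin n) : ∫ x, tentDeriv n i x ∂muI = 0 := by
  have hn : 0 < n := i.pos
  have h := setIntegral_tentDeriv i le_rfl
  rw [div_self (by positivity), setIntegral_Ioc_zero_one] at h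
  rw [h, if_pos (by omega), if_pos (by omega), sub_self]

lemma setIntegral_tentDeriv_tentPeak {n : ℕ} (i j : Fin n) :
    ∫ x in Set.Ioc 0 (tentPeak n j : ℝ), tentDeriv n i x ∂muI = if i = j then 1 else 0 := by
  rw [tentPeak, setIntegral_tentDeriv i (by omega)]
  rcases lt_trichotomy i j with h | rfl | h
  · rw [if_pos (by omega), if_pos (by omega), if_neg h.ne, sub_self]
  · simp
  · rw [if_neg (by omega), if_neg (by omega), if_neg h.ne', sub_self]

theorem isomorphism_lower_bound_general (n : ℕ) :
    ∃ (A : C(Set.Icc (0:ℝ) 1, ℝ) →L[ℝ] (Fin n → ℝ))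
      (B : (Fin n → ℝ) →L[ℝ] Lp ℝ 1 muI),
      ‖A‖ ≤ 1 ∧ ‖B‖ ≤ 2 * n ∧ (∀ y, B y ∈ L10) ∧
      ∀ y : Fin n → ℝ, ∃ g : C(Set.Icc (0:ℝ) 1, ℝ),
        (∀ t : Set.Icc (0:ℝ) 1, g t = ∫ s in Set.Ioc (0:ℝ) t.1, (B y : ℝ → ℝ) s ∂muI) ∧
        A g = y := by
  set B := linearCombinationCLM (tentDeriv n)
  refine ⟨evalCLMPi (tentPeak n), B, norm_evalCLMPi_le _, ?_, fun y => ?_,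
    fun y => ⟨volterra muI (B y), fun t => rfl, ?_⟩⟩
  · simpa [mul_comm] using norm_linearCombinationCLM_le zero_le_two (norm_tentDeriv_le (n := n))
  · change ∫ x, B y x ∂muI = 0
    rw [← setIntegral_univ, setIntegral_linearCombinationCLM]
    simp [integral_tentDeriv]
  · funext j
    change ∫ x in Set.Ioc 0 (tentPeak n j : ℝ), B y x ∂muI = y j
    rw [setIntegral_linearCombinationCLM]
    simp [setIntegral_tentDeriv_tentPeak]

/-- Isomorphism number lower bound `iₙ(V) ≥ 1/(2n)` for the Volterra operator
`V : L¹₀(0,1) → C[0,1]`, in concrete form: there exist bounded linear maps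
`B : ℓ^∞_n → L¹₀(0,1)` with `‖B‖ ≤ 2n` and `A : C[0,1] → ℓ^∞_n` with `‖A‖ ≤ 1`
such that `A ∘ V ∘ B` is the identity on `ℓ^∞_n`. -/
theorem isomorphism_lower_bound (n : ℕ) (hn : 0 < n) :
    ∃ (A : C(Set.Icc (0:ℝ) 1, ℝ) →L[ℝ] (Fin n → ℝ))
      (B : (Fin n → ℝ) →L[ℝ] Lp ℝ 1 muI),
      ‖A‖ ≤ 1 ∧ ‖B‖ ≤ 2 * n ∧ (∀ y, B y ∈ L10) ∧
      ∀ y : Fin n → ℝ, ∃ g : C(Set.Icc (0:ℝ) 1, ℝ),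
        (∀ t : Set.Icc (0:ℝ) 1, g t = ∫ s in Set.Ioc (0:ℝ) t.1, (B y : ℝ → ℝ) s ∂muI) ∧
        A g = y :=
  isomorphism_lower_bound_general n
end

section
/- Let V : L¹₀(0,1) → C[0,1] be the operator Vf(t) = ∫₀ᵗ f. For every n ∈ ℕ, the n-th Gelfand number satisfies cₙ(V) ≥ 1/2. Equivalently, whenever m < n, ρ > 0, and φ₁,…,φ_m are continuous linear functionals on L¹₀(0,1) such that ‖Vf‖_∞ ≤ max_k |φ_k(f)| + ρ‖f‖₁ for all f ∈ L¹₀(0,1), then ρ ≥ 1/2. -/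
open MeasureTheory

open Set Filter Topology

/-!
Extend the `φ k` to functionals `ψ k` on all of `L¹(0,1)` (Hahn–Banach). The curve
`s ↦ (ψ k 𝟙_(0,s])_k` in `ℝ^m` is Lipschitz, hence differentiable at some `t ∈ (0,1)`
(Rademacher). The spike `ε⁻¹ (𝟙_(t,t+ε] - 𝟙_(t+ε,t+2ε])` has mean zero, `L¹` norm at most `2`
and primitive equal to `1` at `t + ε`, while its image under each `ψ k` is a second difference
quotient of that curve at `t`, which tends to `0` as `ε → 0⁺`. So `1 ≤ o(1) + 2ρ`.
-/

instance inst_s6 : IsFiniteMeasure muI :=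
  isFiniteMeasure_restrict.mpr measure_Ioc_lt_top.ne

theorem muI_real_Ioc_le {a b : ℝ} (hab : a ≤ b) : muI.real (Ioc a b) ≤ b - a := by
  calc muI.real (Ioc a b) ≤ volume.real (Ioc a b) := by
        rw [muI, measureReal_restrict_apply measurableSet_Ioc]
        exact measureReal_mono inter_subset_left measure_Ioc_lt_top.ne
    _ = b - a := Real.volume_real_Ioc_of_le hab

theorem muI_real_Ioc {a b : ℝ} (ha : 0 ≤ a) (hb : b ≤ 1) (hab : a ≤ b) :
    muI.real (Ioc a b) = b - a := by
  rw [muI, measureReal_restrict_apply measurableSet_Ioc,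
    inter_eq_left.mpr (Ioc_subset_Ioc ha hb), Real.volume_real_Ioc_of_le hab]

noncomputable def indIoc (a b : ℝ) : Lp ℝ 1 muI :=
  indicatorConstLp 1 measurableSet_Ioc (measure_ne_top muI (Ioc a b)) 1

theorem norm_indIoc_le {a b : ℝ} (hab : a ≤ b) : ‖indIoc a b‖ ≤ b - a := by
  rw [indIoc, norm_indicatorConstLp one_ne_zero ENNReal.one_ne_top]
  simpa using muI_real_Ioc_le hab

theorem indIoc_add_indIoc {a b c : ℝ} (hab : a ≤ b) (hbc : b ≤ c) :
    indIoc a b + indIoc b c = indIoc a c := by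
  rw [indIoc, indIoc, ← indicatorConstLp_disjoint_union _ _ _ _ (Ioc_disjoint_Ioc_of_le le_rfl)]
  simp only [indIoc, Ioc_union_Ioc_eq_Ioc hab hbc]

theorem setIntegral_indIoc {a b : ℝ} {S : Set ℝ} (hS : MeasurableSet S) :
    ∫ x in S, indIoc a b x ∂muI = muI.real (Ioc a b ∩ S) := by
  simp [indIoc, setIntegral_indicatorConstLp hS]

theorem abs_setIntegral_le_norm (f : Lp ℝ 1 muI) (S : Set ℝ) :
    |∫ x in S, f x ∂muI| ≤ ‖f‖ := by
  rw [← Real.norm_eq_abs, L1.norm_eq_integral_norm]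
  exact (norm_integral_le_integral_norm _).trans
    (setIntegral_le_integral (L1.integrable_coeFn f).norm (.of_forall fun _ => norm_nonneg _))

theorem abs_setIntegral_le_supV (f : Lp ℝ 1 muI) {u : ℝ} (hu : u ∈ Icc (0:ℝ) 1) :
    |∫ x in Ioc 0 u, f x ∂muI| ≤ supV f :=
  le_ciSup (f := fun t : Icc (0:ℝ) 1 => |∫ x in Ioc 0 t.1, f x ∂muI|)
    ⟨‖f‖, by rintro _ ⟨t, rfl⟩; exact abs_setIntegral_le_norm f _⟩ ⟨u, hu⟩

noncomputable def spike (t ε : ℝ) : Lp ℝ 1 muI :=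
  ε⁻¹ • (indIoc t (t + ε) - indIoc (t + ε) (t + 2 * ε))

theorem norm_spike_le {t ε : ℝ} (hε : 0 < ε) : ‖spike t ε‖ ≤ 2 := by
  have h₁ := norm_indIoc_le (by linarith : t ≤ t + ε)
  have h₂ := norm_indIoc_le (by linarith : t + ε ≤ t + 2 * ε)
  calc ‖spike t ε‖ ≤ ε⁻¹ * (‖indIoc t (t + ε)‖ + ‖indIoc (t + ε) (t + 2 * ε)‖) := by
        rw [spike, norm_smul, Real.norm_of_nonneg (by positivity)]
        gcongr
        exact norm_sub_le _ _
    _ ≤ ε⁻¹ * (ε + ε) := by gcongr <;> linarith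
    _ = 2 := by field_simp; ring

theorem setIntegral_spike (t ε : ℝ) {S : Set ℝ} (hS : MeasurableSet S) :
    ∫ x in S, spike t ε x ∂muI =
      ε⁻¹ * (muI.real (Ioc t (t + ε) ∩ S) - muI.real (Ioc (t + ε) (t + 2 * ε) ∩ S)) := by
  have hcoe : ⇑(spike t ε) =ᵐ[muI] ε⁻¹ • (⇑(indIoc t (t + ε)) - ⇑(indIoc (t + ε) (t + 2 * ε))) := by
    filter_upwards [Lp.coeFn_smul ε⁻¹ (indIoc t (t + ε) - indIoc (t + ε) (t + 2 * ε)),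
      Lp.coeFn_sub (indIoc t (t + ε)) (indIoc (t + ε) (t + 2 * ε))] with x h₁ h₂
    rw [spike, h₁, Pi.smul_apply, h₂, Pi.smul_apply]
  rw [setIntegral_congr_ae hS (hcoe.mono fun x hx _ => hx)]
  simp only [Pi.smul_apply, Pi.sub_apply, smul_eq_mul]
  rw [integral_const_mul, integral_sub (L1.integrable_coeFn _).integrableOn
    (L1.integrable_coeFn _).integrableOn, setIntegral_indIoc hS, setIntegral_indIoc hS]

theorem spike_mem_L10 {t ε : ℝ} (ht : 0 ≤ t) (hε : 0 < ε) (hfit : t + 2 * ε ≤ 1) :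
    spike t ε ∈ L10 := by
  change ∫ x, spike t ε x ∂muI = 0
  rw [← setIntegral_univ, setIntegral_spike t ε MeasurableSet.univ, inter_univ, inter_univ,
    muI_real_Ioc ht (by linarith) (by linarith), muI_real_Ioc (by linarith) hfit (by linarith)]
  ring

theorem one_le_supV_spike {t ε : ℝ} (ht : 0 ≤ t) (hε : 0 < ε) (hfit : t + 2 * ε ≤ 1) :
    1 ≤ supV (spike t ε) := by
  have hint : ∫ x in Ioc 0 (t + ε), spike t ε x ∂muI = 1 := by
    rw [setIntegral_spike t ε measurableSet_Ioc,
      inter_eq_left.mpr (Ioc_subset_Ioc_left ht),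
      (Ioc_disjoint_Ioc_of_le le_rfl).symm.inter_eq, measureReal_empty,
      muI_real_Ioc ht (by linarith) (by linarith)]
    field_simp
    ring
  have := abs_setIntegral_le_supV (spike t ε) (u := t + ε) ⟨by linarith, by linarith⟩
  rwa [hint, abs_one] at this

theorem tendsto_inv_smul_second_difference {E : Type*} [NormedAddCommGroup E] [NormedSpace ℝ E]
    {G : ℝ → E} {t : ℝ} (hG : DifferentiableAt ℝ G t) :
    Tendsto (fun ε : ℝ => ε⁻¹ • ((2:ℝ) • G (t + ε) - G t - G (t + 2 * ε))) (𝓝[≠] 0) (𝓝 0) := by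
  have h₁ : HasDerivAt (fun ε => G (t + ε)) (deriv G t) 0 :=
    HasDerivAt.comp_const_add (f := G) t 0 (by rw [add_zero]; exact hG.hasDerivAt)
  have h₂ : HasDerivAt (fun ε => G (t + 2 * ε)) ((2:ℝ) • deriv G t) 0 := by
    have := HasDerivAt.scomp (g₁ := G) (0:ℝ) (by rw [id, mul_zero, add_zero]; exact hG.hasDerivAt)
      (((hasDerivAt_id (0:ℝ)).const_mul 2).const_add t)
    simpa [Function.comp_def] using this
  have := ((h₁.const_smul (2:ℝ)).sub h₂).tendsto_slope_zero
  simp only [Pi.sub_apply, Pi.smul_apply, sub_self, zero_add, mul_zero, add_zero] at this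
  refine this.congr fun ε => ?_
  congr 1
  module

theorem spike_eq {t ε : ℝ} (ht : 0 ≤ t) (hε : 0 ≤ ε) :
    spike t ε = ε⁻¹ • ((2:ℝ) • indIoc 0 (t + ε) - indIoc 0 t - indIoc 0 (t + 2 * ε)) := by
  rw [spike, ← indIoc_add_indIoc ht (by linarith : t ≤ t + ε),
    ← indIoc_add_indIoc (by linarith : 0 ≤ t + ε) (by linarith : t + ε ≤ t + 2 * ε),
    ← indIoc_add_indIoc ht (by linarith : t ≤ t + ε)]
  congr 1
  module

theorem lipschitzOnWith_indIoc (a : ℝ) : LipschitzOnWith 1 (indIoc a) (Ici a) := by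
  refine LipschitzOnWith.of_dist_le_mul fun x hx y hy => ?_
  wlog hxy : x ≤ y generalizing x y
  · rw [dist_comm, dist_comm x]; exact this y hy x hx (le_of_not_ge hxy)
  rw [dist_eq_norm, norm_sub_rev, ← indIoc_add_indIoc (hx : a ≤ x) hxy, add_sub_cancel_left,
    NNReal.coe_one, one_mul, Real.dist_eq, abs_sub_comm, abs_of_nonneg (by linarith)]
  exact norm_indIoc_le hxy

theorem exists_tendsto_apply_spike {E : Type*} [NormedAddCommGroup E] [NormedSpace ℝ E]
    [FiniteDimensional ℝ E] (Ψ : Lp ℝ 1 muI →L[ℝ] E) :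
    ∃ t ∈ Ioo (0:ℝ) 1, Tendsto (fun ε => Ψ (spike t ε)) (𝓝[>] 0) (𝓝 0) := by
  have hG := Ψ.lipschitz.comp_lipschitzOnWith (lipschitzOnWith_indIoc 0)
  obtain ⟨t, ⟨ht₀, ht₁⟩, hdiff⟩ := Measure.exists_mem_of_measure_ne_zero_of_ae
    (by simp : volume (Ioo (0:ℝ) 1) ≠ 0) (ae_restrict_of_ae hG.ae_differentiableWithinAt_of_mem_real)
  have hdiff' := (hdiff ht₀.le).differentiableAt (Ici_mem_nhds ht₀)
  refine ⟨t, ⟨ht₀, ht₁⟩, ((tendsto_inv_smul_second_difference hdiff').mono_left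
    (nhdsGT_le_nhdsNE 0)).congr' ?_⟩
  filter_upwards [self_mem_nhdsWithin] with ε (hε : 0 < ε)
  rw [spike_eq ht₀.le hε.le]
  simp only [map_smul, map_sub, Function.comp_apply]

theorem exists_mem_L10_one_le_supV {E : Type*} [NormedAddCommGroup E] [NormedSpace ℝ E]
    [FiniteDimensional ℝ E] (Ψ : Lp ℝ 1 muI →L[ℝ] E) {δ : ℝ} (hδ : 0 < δ) :
    ∃ f ∈ L10, ‖f‖ ≤ 2 ∧ 1 ≤ supV f ∧ ‖Ψ f‖ ≤ δ := by
  obtain ⟨t, ⟨ht₀, ht₁⟩, hlim⟩ := exists_tendsto_apply_spike Ψ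
  have hsmall : ∀ᶠ ε in 𝓝[>] 0, ‖Ψ (spike t ε)‖ < δ := by
    simpa using (hlim.norm.eventually (gt_mem_nhds (by simpa using hδ)))
  obtain ⟨ε, hΨ, (hε : 0 < ε), hε₁⟩ := (hsmall.and (eventually_mem_nhdsWithin.and
    (nhdsWithin_le_nhds (gt_mem_nhds (by linarith : (0:ℝ) < (1 - t) / 2))))).exists
  have hfit : t + 2 * ε ≤ 1 := by linarith
  exact ⟨spike t ε, spike_mem_L10 ht₀.le hε hfit, norm_spike_le hε,
    one_le_supV_spike ht₀.le hε hfit, hΨ.le⟩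

theorem gelfand_lower_bound_general (m : ℕ) (ρ : ℝ) (hρ : 0 < ρ)
    (φ : Fin m → (L10 →L[ℝ] ℝ))
    (h : ∀ f : L10, supV (f : Lp ℝ 1 muI) ≤ (⨆ k : Fin m, |φ k f|) + ρ * ‖f‖) :
    1/2 ≤ ρ := by
  choose ψ hψ using fun k => exists_extension_norm_eq L10 (φ k)
  suffices ∀ δ > 0, 1 ≤ 2 * ρ + δ by linarith [le_of_forall_pos_le_add this]
  intro δ hδ
  obtain ⟨f, hf, hnorm, hsup, hΨ⟩ := exists_mem_L10_one_le_supV (ContinuousLinearMap.pi ψ) hδ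
  have hφ : ⨆ k, |φ k ⟨f, hf⟩| ≤ δ := Real.iSup_le (fun k => by
    rw [← (hψ k).1]; exact (norm_le_pi_norm _ k).trans hΨ) hδ.le
  calc 1 ≤ supV f := hsup
    _ ≤ δ + ρ * ‖f‖ := (h ⟨f, hf⟩).trans (add_le_add hφ le_rfl)
    _ ≤ δ + ρ * 2 := by gcongr
    _ = 2 * ρ + δ := by ring

/-- Gelfand number lower bound `cₙ(V) ≥ 1/2` for the Volterra operator
`V : L¹₀(0,1) → C[0,1]`, via the functional criterion: whenever `m < n`, `ρ > 0`
and `φ₁, …, φ_m` are continuous linear functionals on `L¹₀(0,1)` such that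
`‖Vf‖_∞ ≤ max_k |φ_k f| + ρ ‖f‖₁` for all `f ∈ L¹₀(0,1)`, then `ρ ≥ 1/2`. -/
theorem gelfand_lower_bound (n m : ℕ) (hmn : m < n) (ρ : ℝ) (hρ : 0 < ρ)
    (φ : Fin m → (L10 →L[ℝ] ℝ))
    (h : ∀ f : L10, supV (f : Lp ℝ 1 muI) ≤ (⨆ k : Fin m, |φ k f|) + ρ * ‖f‖) :
    1/2 ≤ ρ :=
  gelfand_lower_bound_general m ρ hρ φ h
end

section
/- Let 1 ≤ q ≤ p < ∞, let f ∈ L^{p,q}(Ω), and let {E_k} be pairwise disjoint measurable subsets of Ω. Then Σ_k ‖f χ_{E_k}‖_{p,q}^p ≤ ‖f‖_{p,q}^p. -/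
open MeasureTheory ENNReal

/-- The Lorentz norm `‖f‖_{p,q} = (p ∫₀^∞ μ_f(s)^{q/p} s^{q−1} ds)^{1/q}`, where
`μ_f(s) = μ{x : |f x| > s}` is the distribution function (value in `[0,∞]`). -/
noncomputable def lorentzNorm {α : Type*} [MeasurableSpace α] (μ : Measure α)
    (p q : ℝ) (f : α → ℝ) : ℝ≥0∞ :=
  (ENNReal.ofReal p *
    ∫⁻ s in Set.Ioi (0:ℝ), (μ {x | s < |f x|}) ^ (q / p) * ENNReal.ofReal (s ^ (q - 1))) ^ (1 / q)

/-!
With `θ = q/p ≤ 1`, `G(s) = μ{|f| > s}` and `G_k(s) = μ(E_k ∩ {|f| > s})` one has `Σ_k G_k ≤ G` and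
`‖f χ_{E_k}‖^p = p^{1/θ} (∫ G_k^θ s^{q-1} ds)^{1/θ}`. Writing `G_k^θ = (G_k/G)^θ G^θ`, Hölder's
inequality with exponents `θ` and `1 - θ` against the density `D = G^θ s^{q-1}` gives
`∫ G_k^θ s^{q-1} ≤ (∫ (G_k/G) D)^θ (∫ D)^{1-θ}`. Raising to the power `1/θ` makes the right-hand
side linear in `G_k`, and summing with `Σ_k G_k/G ≤ 1` bounds the total by `(∫ D)^{1/θ}`.
-/

namespace ENNReal

lemma div_rpow_mul_rpow_mul_eq {a b c : ℝ≥0∞} {θ : ℝ} (hθ : 0 < θ) (hab : a ≤ b)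
    (hbc : b ^ θ * c ≠ ∞) : (a / b) ^ θ * (b ^ θ * c) = a ^ θ * c := by
  rcases eq_or_ne b ∞ with rfl | hb
  · obtain rfl : c = 0 := by
      by_contra hc
      exact hbc (by rw [top_rpow_of_pos hθ, top_mul hc])
    simp
  · rw [← mul_assoc, ← mul_rpow_of_nonneg _ _ hθ.le,
      ENNReal.div_mul_cancel' (fun hb0 => le_antisymm (hb0 ▸ hab) bot_le) (absurd · hb)]

end ENNReal

section Holder

variable {β : Type*} [MeasurableSpace β] {ρ : Measure β}

lemma lintegral_rpow_mul_le_of_le_one {θ : ℝ} (hθ0 : 0 ≤ θ) (hθ1 : θ ≤ 1) {u D : β → ℝ≥0∞}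
    (hu : AEMeasurable u ρ) (hD : AEMeasurable D ρ) :
    ∫⁻ s, u s ^ θ * D s ∂ρ ≤ (∫⁻ s, u s * D s ∂ρ) ^ θ * (∫⁻ s, D s ∂ρ) ^ (1 - θ) :=
  calc ∫⁻ s, u s ^ θ * D s ∂ρ = ∫⁻ s, (u s * D s) ^ θ * D s ^ (1 - θ) ∂ρ :=
        lintegral_congr fun s => by
          rw [mul_rpow_of_nonneg _ _ hθ0, mul_assoc,
            ← rpow_add_of_nonneg _ _ hθ0 (sub_nonneg.2 hθ1), add_sub_cancel, rpow_one]
    _ ≤ _ := lintegral_mul_norm_pow_le (hu.mul hD) hD hθ0 (sub_nonneg.2 hθ1) (add_sub_cancel θ 1)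

theorem tsum_lintegral_rpow_mul_rpow_inv_le {ι : Type*} [Countable ι] {θ : ℝ} (hθ0 : 0 < θ)
    (hθ1 : θ ≤ 1) {G w : β → ℝ≥0∞} {g : ι → β → ℝ≥0∞} (hG : AEMeasurable G ρ)
    (hg : ∀ k, AEMeasurable (g k) ρ) (hw : AEMeasurable w ρ)
    (hsum : ∀ᵐ s ∂ρ, ∑' k, g k s ≤ G s) :
    ∑' k, (∫⁻ s, g k s ^ θ * w s ∂ρ) ^ θ⁻¹ ≤ (∫⁻ s, G s ^ θ * w s ∂ρ) ^ θ⁻¹ := by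
  set D := fun s => G s ^ θ * w s
  set J := ∫⁻ s, D s ∂ρ
  have hD : AEMeasurable D ρ := (hG.pow_const θ).mul hw
  rcases eq_or_ne J ∞ with hJ | hJ
  · rw [hJ, top_rpow_of_pos (inv_pos.2 hθ0)]
    exact le_top
  set h := fun k s => g k s / G s
  have hh : ∀ k, AEMeasurable (h k) ρ := fun k => (hg k).div hG
  have holder : ∀ k, ∫⁻ s, g k s ^ θ * w s ∂ρ ≤ (∫⁻ s, h k s * D s ∂ρ) ^ θ * J ^ (1 - θ) :=
    fun k => calc
      ∫⁻ s, g k s ^ θ * w s ∂ρ = ∫⁻ s, h k s ^ θ * D s ∂ρ := lintegral_congr_ae <| by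
          filter_upwards [hsum, ae_lt_top' hD hJ] with s hs hDs
          exact (div_rpow_mul_rpow_mul_eq hθ0 ((ENNReal.le_tsum k).trans hs) hDs.ne).symm
      _ ≤ _ := lintegral_rpow_mul_le_of_le_one hθ0.le hθ1 (hh k) hD
  have hshares : ∑' k, ∫⁻ s, h k s * D s ∂ρ ≤ J := by
    rw [← lintegral_tsum (f := fun k s => h k s * D s) fun k => (hh k).mul hD]
    refine lintegral_mono_ae ?_
    filter_upwards [hsum] with s hs
    calc ∑' k, h k s * D s = (∑' k, g k s) / G s * D s := by
          simp only [h, div_eq_mul_inv, ENNReal.tsum_mul_right]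
      _ ≤ G s / G s * D s := by gcongr
      _ ≤ D s := mul_le_of_le_one_left' ENNReal.div_self_le_one
  have hθinv : 0 ≤ θ⁻¹ - 1 := sub_nonneg.2 (one_le_inv₀ hθ0 |>.2 hθ1)
  calc ∑' k, (∫⁻ s, g k s ^ θ * w s ∂ρ) ^ θ⁻¹
      ≤ ∑' k, (∫⁻ s, h k s * D s ∂ρ) * J ^ (θ⁻¹ - 1) := ENNReal.tsum_le_tsum fun k => by
        grw [holder k]
        rw [mul_rpow_of_nonneg _ _ (inv_nonneg.2 hθ0.le), ← rpow_mul, ← rpow_mul,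
          mul_inv_cancel₀ hθ0.ne', rpow_one, sub_mul, one_mul, mul_inv_cancel₀ hθ0.ne']
    _ = (∑' k, ∫⁻ s, h k s * D s ∂ρ) * J ^ (θ⁻¹ - 1) := ENNReal.tsum_mul_right
    _ ≤ J * J ^ (θ⁻¹ - 1) := by gcongr
    _ = J ^ (1 + (θ⁻¹ - 1)) := by rw [rpow_add_of_nonneg _ _ zero_le_one hθinv, rpow_one]
    _ = J ^ θ⁻¹ := by rw [add_sub_cancel]

end Holder

lemma setOf_lt_abs_indicator {α : Type*} {s : ℝ} (hs : 0 ≤ s) (E : Set α) (f : α → ℝ) :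
    {x | s < |E.indicator f x|} = E ∩ {x | s < |f x|} := by
  ext x
  by_cases hx : x ∈ E <;> simp [hx, hs.not_gt]

section Distribution

variable {α : Type*} [MeasurableSpace α]

lemma measurable_measure_setOf_lt_abs (μ : Measure α) (f : α → ℝ) :
    Measurable fun s : ℝ => μ {x | s < |f x|} :=
  Antitone.measurable fun _ _ hst => measure_mono fun _ hx => hst.trans_lt hx

lemma tsum_measure_inter_le {ι : Type*} [Countable ι] (μ : Measure α) {E : ι → Set α}
    (hE : ∀ k, MeasurableSet (E k)) (hdisj : Pairwise (Function.onFun Disjoint E)) (S : Set α) :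
    ∑' k, μ (E k ∩ S) ≤ μ S :=
  calc ∑' k, μ (E k ∩ S) = μ.restrict (⋃ k, E k) S := by
        simp only [Measure.restrict_iUnion hdisj hE, Measure.sum_apply_of_countable,
          Measure.restrict_apply' (hE _), Set.inter_comm]
    _ ≤ μ S := Measure.restrict_apply_le _ _

lemma lorentzNorm_rpow (μ : Measure α) {p q : ℝ} (hp : 0 ≤ p) (hq : 0 < q) (f : α → ℝ) :
    lorentzNorm μ p q f ^ p = ENNReal.ofReal p ^ (p / q) *
      (∫⁻ s in Set.Ioi (0:ℝ), (μ {x | s < |f x|}) ^ (q / p) * ENNReal.ofReal (s ^ (q - 1))) ^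
        (p / q) := by
  rw [lorentzNorm, ← rpow_mul, one_div_mul_eq_div, mul_rpow_of_nonneg _ _ (div_nonneg hp hq.le)]

end Distribution

theorem lorentz_norm_sum_over_disjoint_sets_general {α : Type*} [MeasurableSpace α]
    (μ : Measure α) (p q : ℝ) (hq : 1 ≤ q) (hpq : q ≤ p)
    (f : α → ℝ)
    (E : ℕ → Set α) (hE : ∀ k, MeasurableSet (E k))
    (hdisj : Pairwise (Function.onFun Disjoint E)) :
    ∑' k : ℕ, (lorentzNorm μ p q ((E k).indicator f)) ^ p ≤ (lorentzNorm μ p q f) ^ p := by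
  have hq0 : 0 < q := by linarith
  have hp0 : 0 < p := by linarith
  simp_rw [lorentzNorm_rpow μ hp0.le hq0, ENNReal.tsum_mul_left, ← inv_div q p]
  gcongr
  refine tsum_lintegral_rpow_mul_rpow_inv_le (div_pos hq0 hp0) ((div_le_one hp0).2 hpq)
    (measurable_measure_setOf_lt_abs μ f).aemeasurable
    (fun k => (measurable_measure_setOf_lt_abs μ _).aemeasurable) (by fun_prop) ?_
  refine ae_restrict_of_forall_mem measurableSet_Ioi fun s hs => ?_
  simp_rw [setOf_lt_abs_indicator (le_of_lt hs)]
  exact tsum_measure_inter_le μ hE hdisj _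

/-- Summation property of Lorentz norms for `1 ≤ q ≤ p < ∞`: if `f ∈ L^{p,q}(Ω,μ)`
and `(E k)` are pairwise disjoint measurable subsets, then
`Σ_k ‖f χ_{E_k}‖_{p,q}^p ≤ ‖f‖_{p,q}^p`. -/
theorem lorentz_norm_sum_over_disjoint_sets {α : Type*} [MeasurableSpace α]
    (μ : Measure α) (p q : ℝ) (hq : 1 ≤ q) (hpq : q ≤ p)
    (f : α → ℝ) (hf : Measurable f) (hfin : lorentzNorm μ p q f ≠ ⊤)
    (E : ℕ → Set α) (hE : ∀ k, MeasurableSet (E k))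
    (hdisj : Pairwise (Function.onFun Disjoint E)) :
    ∑' k : ℕ, (lorentzNorm μ p q ((E k).indicator f)) ^ p ≤ (lorentzNorm μ p q f) ^ p :=
  lorentz_norm_sum_over_disjoint_sets_general μ p q hq hpq f E hE hdisj
end
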